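/- arXiv:1206.1387 — 2 statements merged into one kernel-verified Lean document; each statement's English description precedes it below -/
import Mathlib

section
/- Let e, e' ∈ Σ_p(D) with V(e,e') nonempty. Then all elements of V(e,e') have the same weight: for all V, V' ∈ V(e,e'), w(V) = w(V'). -/
open scoped BigOperators
open scoped Classical

/-- `sp p u` is the sum of the base-`p` digits of `u`. -/
def sp (p u : ℕ) : ℕ := (Nat.digits p u).sum

variable {ι : Type} [Fintype ι]

/-- The coordinatewise sum `Σ_{d ∈ D} u_d · d`. -/
def sigmaSum (D : Finset (ι → ℕ)) (U : D → ℕ) (k : ι) : ℕ :=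
  ∑ d, U d * (d : ι → ℕ) k

/-- Membership in the set `E_{D,p}(r)`. -/
def memE (p : ℕ) (D : Finset (ι → ℕ)) (r : ℕ) (U : D → ℕ) : Prop :=
  (∀ d, U d ≤ p ^ r - 1) ∧
  (∀ k, (p ^ r - 1) ∣ sigmaSum D U k ∧ 0 < sigmaSum D U k)

/-- The `p`-weight `s_p(U)` of a tuple `U`. -/
def spU (p : ℕ) (D : Finset (ι → ℕ)) (U : D → ℕ) : ℕ := ∑ d, sp p (U d)

/-- `s_{D,p}(r)`, the minimal `p`-weight of an element of `E_{D,p}(r)`. -/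
noncomputable def sDp (p : ℕ) (D : Finset (ι → ℕ)) (r : ℕ) : ℕ :=
  sInf { s | ∃ U : D → ℕ, memE p D r U ∧ spU p D U = s }

/-- The `p`-density `δ_p(D)` of the set `D`. -/
noncomputable def density (p : ℕ) (D : Finset (ι → ℕ)) : ℝ :=
  (1 / ((p : ℝ) - 1)) * sInf { x : ℝ | ∃ r : ℕ, 1 ≤ r ∧ x = (sDp p D r : ℝ) / (r : ℝ) }

/-- A minimal solution in `E_{D,p}(r)`. -/
def minimalSol (p : ℕ) (D : Finset (ι → ℕ)) (r : ℕ) (U : D → ℕ) : Prop :=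
  memE p D r U ∧ (spU p D U : ℝ) = ((p : ℝ) - 1) * (r : ℝ) * density p D

/-- `φ_r(U) = (1/(p^r − 1)) Σ_{d ∈ D} u_d · d`. -/
def phiMap (p : ℕ) (D : Finset (ι → ℕ)) (r : ℕ) (U : D → ℕ) (k : ι) : ℕ :=
  sigmaSum D U k / (p ^ r - 1)

/-- The shift `δ_r` on `{0, …, p^r − 1}`. -/
def shiftFun (p r u : ℕ) : ℕ := if u = p ^ r - 1 then u else (p * u) % (p ^ r - 1)

/-- The componentwise action of the shift `δ_r` on tuples. -/
def shiftE (p : ℕ) (D : Finset (ι → ℕ)) (r : ℕ) (U : D → ℕ) : D → ℕ :=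
  fun d => shiftFun p r (U d)

/-- The support `φ_U : ℤ/rℤ → ℕ^n` of a solution `U ∈ E_{D,p}(r)`. -/
def suppMap (p : ℕ) (D : Finset (ι → ℕ)) (r : ℕ) (U : D → ℕ) (k : ZMod r) : ι → ℕ :=
  phiMap p D r ((shiftE p D r)^[k.val] U)

/-- Membership in `MI_{D,p}(r)`: minimal irreducible solutions. -/
def memMI (p : ℕ) (D : Finset (ι → ℕ)) (r : ℕ) (U : D → ℕ) : Prop :=
  minimalSol p D r U ∧ Function.Injective (suppMap p D r U)

/-- The `p`-minimal support `Σ_p(D)`. -/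
def minSupport (p : ℕ) (D : Finset (ι → ℕ)) : Set (ι → ℕ) :=
  { e | ∃ r : ℕ, 1 ≤ r ∧ ∃ U : D → ℕ, memMI p D r U ∧ e ∈ Set.range (suppMap p D r U) }

/-- `ψ(U)`: the tuple of last base-`p` digits of `U`. -/
def psiMap (p : ℕ) (D : Finset (ι → ℕ)) (U : D → ℕ) : D → ℕ := fun d => U d % p

/-- The set `V(e, e')` of digit tuples of minimal irreducible solutions with
`φ_U(−1) = e` and `φ_U(0) = e'`. -/
def Vset (p : ℕ) (D : Finset (ι → ℕ)) (e e' : ι → ℕ) : Set (D → ℕ) :=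
  { v | ∃ r : ℕ, 1 ≤ r ∧ ∃ U : D → ℕ, memMI p D r U ∧
      suppMap p D r U (-1) = e ∧ suppMap p D r U 0 = e' ∧ psiMap p D U = v }

/-- The weight `w(V) = Σ_{d ∈ D} v_d`. -/
def weightV (D : Finset (ι → ℕ)) (v : D → ℕ) : ℕ := ∑ d, v d

section AuxVCW

private lemma sp_rec {p : ℕ} (hp : 2 ≤ p) (n : ℕ) :
    sp p n = n % p + sp p (n / p) := by
  rcases Nat.eq_zero_or_pos n with h | h
  · simp [h, sp]
  · rw [sp, Nat.digits_def' hp h, List.sum_cons, sp]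

private lemma shiftE_iterate_apply (p : ℕ) (D : Finset (ι → ℕ)) (r k : ℕ) (U : D → ℕ) (d : D) :
    (shiftE p D r)^[k] U d = (shiftFun p r)^[k] (U d) := by
  induction k generalizing U with
  | zero => rfl
  | succ k ih =>
    rw [Function.iterate_succ_apply, ih, Function.iterate_succ_apply]
    rfl

private lemma shiftFun_iter_mod {p r : ℕ} (hp : 2 ≤ p) (hr : 1 ≤ r) {u : ℕ}
    (hu : u < p ^ r - 1) (k : ℕ) :
    (shiftFun p r)^[k] u = p ^ k * u % (p ^ r - 1) := by
  have hm : 2 ≤ p ^ r := by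
    calc (2 : ℕ) ≤ p := hp
    _ = p ^ 1 := (pow_one p).symm
    _ ≤ p ^ r := Nat.pow_le_pow_right (by omega) hr
  induction k with
  | zero => simpa using (Nat.mod_eq_of_lt hu).symm
  | succ k ih =>
    rw [Function.iterate_succ_apply', ih, shiftFun]
    have h1 : p ^ k * u % (p ^ r - 1) < p ^ r - 1 := Nat.mod_lt _ (by omega)
    rw [if_neg (by omega)]
    rw [Nat.mul_mod_mod, pow_succ, mul_comm (p ^ k) p, mul_assoc]

private lemma shiftFun_rotate {p r : ℕ} (hp : 2 ≤ p) (hr : 1 ≤ r) {u : ℕ}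
    (hu : u ≤ p ^ r - 1) :
    (shiftFun p r)^[r - 1] u = u / p + p ^ (r - 1) * (u % p) := by
  have hP1 : 1 ≤ p ^ (r - 1) := Nat.one_le_pow _ _ (by omega)
  have hPp : p ^ (r - 1) * p = p ^ r := by rw [← pow_succ]; congr 1; omega
  have hple : p ≤ p ^ r := by
    calc p = 1 * p := (one_mul p).symm
    _ ≤ p ^ (r - 1) * p := Nat.mul_le_mul_right p hP1
    _ = p ^ r := hPp
  have hle2 : p ^ (r - 1) ≤ p ^ r := by
    calc p ^ (r - 1) = p ^ (r - 1) * 1 := (mul_one _).symm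
    _ ≤ p ^ (r - 1) * p := Nat.mul_le_mul_left _ (by omega)
    _ = p ^ r := hPp
  set P := p ^ (r - 1) with hPdef
  set q := u / p with hqdef
  set v := u % p with hvdef
  have hdm : p * q + v = u := Nat.div_add_mod u p
  have hvp : v < p := Nat.mod_lt _ (by omega)
  rcases eq_or_lt_of_le hu with heq | hlt
  · -- fixed point case : u = p ^ r - 1
    have hfix : shiftFun p r u = u := by rw [shiftFun, if_pos heq]
    rw [Function.iterate_fixed hfix]
    have hmul : p * (P - 1) = p ^ r - p := by
      rw [Nat.mul_sub, mul_one, mul_comm, hPp]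
    have h2 : q = P - 1 ∧ v = p - 1 :=
      (Nat.div_mod_unique (show 0 < p by omega)).mpr ⟨by rw [hmul]; omega, by omega⟩
    rw [h2.1, h2.2]
    have hmul2 : P * (p - 1) = p ^ r - P := by
      rw [Nat.mul_sub, mul_one, hPp]
    rw [hmul2]
    omega
  · -- strict case
    rw [shiftFun_iter_mod hp hr hlt]
    have hq : q < P := by
      have h1 : p * q < p * P := by
        have : p * P = p ^ r := by rw [mul_comm, hPp]
        omega
      exact Nat.lt_of_mul_lt_mul_left h1
    have hx : q + P * v < p ^ r - 1 := by
      by_contra hcon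
      push_neg at hcon
      have hv1 : P * v ≤ p ^ r - P := by
        have h := Nat.mul_le_mul_left P (show v ≤ p - 1 by omega)
        rw [Nat.mul_sub, mul_one, hPp] at h
        exact h
      have hq1 : q = P - 1 := by omega
      have hv2 : P * v = p ^ r - P := by omega
      have hv3 : v = p - 1 := by
        have hmul2 : P * (p - 1) = p ^ r - P := by rw [Nat.mul_sub, mul_one, hPp]
        exact Nat.eq_of_mul_eq_mul_left (show 0 < P by omega)
          (show P * v = P * (p - 1) by rw [hv2, hmul2])
      have h5 : p * (P - 1) = p ^ r - p := by
        rw [Nat.mul_sub, mul_one, mul_comm, hPp]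
      rw [hq1, h5] at hdm
      omega
    have hPu : P * u = (p ^ r - 1) * q + (q + P * v) := by
      have h6 : P * u = P * p * q + P * v := by rw [← hdm]; ring
      rw [h6, Nat.sub_mul, one_mul]
      have h7 : P * p * q = p ^ r * q := by rw [hPp]
      have h8 : q ≤ p ^ r * q := Nat.le_mul_of_pos_left q (by omega)
      omega
    rw [hPu, Nat.mul_add_mod, Nat.mod_eq_of_lt hx]

private lemma sumA (p : ℕ) (hp : p.Prime) (D : Finset (ι → ℕ)) (r : ℕ) (hr : 1 ≤ r)
    (U : D → ℕ) (hU : memE p D r U) (k : ι) :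
    p * suppMap p D r U (-1) k
      = suppMap p D r U 0 k + ∑ d, (U d % p) * (d : ι → ℕ) k := by
  have hp2 := hp.two_le
  obtain ⟨r', rfl⟩ : ∃ r', r = r' + 1 := ⟨r - 1, by omega⟩
  have hm2 : 2 ≤ p ^ (r' + 1) := by
    calc (2 : ℕ) ≤ p := hp2
    _ = p ^ 1 := (pow_one p).symm
    _ ≤ p ^ (r' + 1) := Nat.pow_le_pow_right (by omega) (by omega)
  have hval : (-1 : ZMod (r' + 1)).val = r' := ZMod.val_neg_one r'
  have hW : ((shiftE p D (r' + 1))^[(-1 : ZMod (r' + 1)).val] U)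
      = fun d => U d / p + p ^ r' * (U d % p) := by
    funext d
    rw [hval, shiftE_iterate_apply]
    have h := shiftFun_rotate (p := p) (r := r' + 1) hp2 (by omega) (hU.1 d)
    simpa using h
  have hkey : p * sigmaSum D ((shiftE p D (r' + 1))^[(-1 : ZMod (r' + 1)).val] U) k
      = sigmaSum D U k + (p ^ (r' + 1) - 1) * ∑ d, (U d % p) * (d : ι → ℕ) k := by
    rw [hW]
    simp only [sigmaSum, Finset.mul_sum, ← Finset.sum_add_distrib]
    apply Finset.sum_congr rfl
    intro d _
    set a := U d / p with hadef
    set v := U d % p with hvdef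
    have hdm : p * a + v = U d := Nat.div_add_mod (U d) p
    rw [← hdm]
    have h1 : 1 ≤ p ^ (r' + 1) := by omega
    zify [h1]
    push_cast
    ring
  have hdvdB : (p ^ (r' + 1) - 1) ∣ sigmaSum D U k := (hU.2 k).1
  have hcop : Nat.Coprime (p ^ (r' + 1) - 1) p := by
    have h1 : ¬ p ∣ (p ^ (r' + 1) - 1) := by
      intro h
      have h2 : p ∣ p ^ (r' + 1) := dvd_pow_self p (Nat.succ_ne_zero r')
      have h3 : p ∣ p ^ (r' + 1) - (p ^ (r' + 1) - 1) := Nat.dvd_sub h2 h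
      have h4 : p ^ (r' + 1) - (p ^ (r' + 1) - 1) = 1 := by omega
      rw [h4] at h3
      exact absurd (Nat.le_of_dvd one_pos h3) (by omega)
    exact ((hp.coprime_iff_not_dvd).mpr h1).symm
  have hdvdA : (p ^ (r' + 1) - 1)
      ∣ sigmaSum D ((shiftE p D (r' + 1))^[(-1 : ZMod (r' + 1)).val] U) k := by
    apply Nat.Coprime.dvd_of_dvd_mul_left hcop
    rw [hkey]
    exact Dvd.dvd.add hdvdB (Dvd.intro _ rfl)
  obtain ⟨a', ha⟩ := hdvdA
  obtain ⟨b', hb⟩ := hdvdB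
  have hm0 : 0 < p ^ (r' + 1) - 1 := by omega
  have hsupp1 : suppMap p D (r' + 1) U (-1) k = a' := by
    show sigmaSum D ((shiftE p D (r' + 1))^[(-1 : ZMod (r' + 1)).val] U) k
        / (p ^ (r' + 1) - 1) = a'
    rw [ha, Nat.mul_div_cancel_left _ hm0]
  have hsupp0 : suppMap p D (r' + 1) U 0 k = b' := by
    show sigmaSum D ((shiftE p D (r' + 1))^[(0 : ZMod (r' + 1)).val] U) k
        / (p ^ (r' + 1) - 1) = b'
    rw [ZMod.val_zero, Function.iterate_zero_apply, hb, Nat.mul_div_cancel_left _ hm0]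
  rw [hsupp1, hsupp0]
  rw [ha, hb] at hkey
  have h2 : (p ^ (r' + 1) - 1) * (p * a')
      = (p ^ (r' + 1) - 1) * (b' + ∑ d, (U d % p) * (d : ι → ℕ) k) := by
    rw [mul_add, ← hkey]; ring
  exact Nat.eq_of_mul_eq_mul_left hm0 h2

private lemma swap_le (p : ℕ) (hp : p.Prime) (D : Finset (ι → ℕ)) (r : ℕ) (hr : 1 ≤ r)
    (U : D → ℕ) (hU : minimalSol p D r U) (v' : D → ℕ) (hv' : ∀ d, v' d < p)
    (hsum : ∀ k, (∑ d, (U d % p) * (d : ι → ℕ) k) = ∑ d, v' d * (d : ι → ℕ) k) :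
    ∑ d, U d % p ≤ ∑ d, v' d := by
  have hp2 := hp.two_le
  have hm2 : 2 ≤ p ^ r := by
    calc (2 : ℕ) ≤ p := hp2
    _ = p ^ 1 := (pow_one p).symm
    _ ≤ p ^ r := Nat.pow_le_pow_right (by omega) hr
  have hPp : p ^ (r - 1) * p = p ^ r := by rw [← pow_succ]; congr 1; omega
  set W : D → ℕ := fun d => p * (U d / p) + v' d with hWdef
  have hWd : ∀ d, W d = p * (U d / p) + v' d := fun d => rfl
  have hWE : memE p D r W := by
    constructor
    · intro d
      have h1 : U d / p < p ^ (r - 1) := by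
        rw [Nat.div_lt_iff_lt_mul (show 0 < p by omega), hPp]
        have := hU.1.1 d
        omega
      have h2 : p * (U d / p + 1) ≤ p * p ^ (r - 1) := Nat.mul_le_mul_left p h1
      have h3 : p * p ^ (r - 1) = p ^ r := by rw [mul_comm, hPp]
      have h4 : p * (U d / p + 1) = p * (U d / p) + p := by ring
      rw [hWd d]
      have := hv' d
      omega
    · intro k
      have heq : sigmaSum D W k = sigmaSum D U k := by
        have h5 : sigmaSum D W k + ∑ d, (U d % p) * (d : ι → ℕ) k
            = sigmaSum D U k + ∑ d, v' d * (d : ι → ℕ) k := by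
          simp only [sigmaSum, ← Finset.sum_add_distrib]
          apply Finset.sum_congr rfl
          intro d _
          rw [hWd d]
          set a := U d / p with hadef
          set w := U d % p with hwdef
          have hdm : p * a + w = U d := Nat.div_add_mod (U d) p
          rw [← hdm]
          ring
        have h6 := hsum k
        omega
      rw [heq]
      exact hU.1.2 k
  have hsp : spU p D W + ∑ d, U d % p = spU p D U + ∑ d, v' d := by
    simp only [spU, ← Finset.sum_add_distrib]
    apply Finset.sum_congr rfl
    intro d _
    rw [sp_rec hp2 (W d), sp_rec hp2 (U d), hWd d]
    have h1 : (p * (U d / p) + v' d) % p = v' d := by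
      rw [Nat.mul_add_mod, Nat.mod_eq_of_lt (hv' d)]
    have h2 : (p * (U d / p) + v' d) / p = U d / p := by
      rw [Nat.mul_add_div (show 0 < p by omega), Nat.div_eq_of_lt (hv' d), add_zero]
    rw [h1, h2]
    omega
  have hWin : sDp p D r ≤ spU p D W := Nat.sInf_le ⟨W, hWE, rfl⟩
  have hle2 : ((p : ℝ) - 1) * (r : ℝ) * density p D ≤ (sDp p D r : ℝ) := by
    rw [density]
    have hp1 : (1 : ℝ) < (p : ℝ) := by exact_mod_cast hp.one_lt
    have hr0 : (0 : ℝ) < (r : ℝ) := by exact_mod_cast hr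
    have hne : ((p : ℝ) - 1) ≠ 0 := by linarith
    have hSle : sInf { x : ℝ | ∃ s : ℕ, 1 ≤ s ∧ x = (sDp p D s : ℝ) / (s : ℝ) }
        ≤ (sDp p D r : ℝ) / (r : ℝ) := by
      apply csInf_le
      · refine ⟨0, ?_⟩
        rintro x ⟨s, hs, rfl⟩
        positivity
      · exact ⟨r, hr, rfl⟩
    set S := sInf { x : ℝ | ∃ s : ℕ, 1 ≤ s ∧ x = (sDp p D s : ℝ) / (s : ℝ) } with hSdef
    have heq1 : ((p : ℝ) - 1) * (r : ℝ) * (1 / ((p : ℝ) - 1) * S) = (r : ℝ) * S := by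
      field_simp
    rw [heq1]
    calc (r : ℝ) * S ≤ (r : ℝ) * ((sDp p D r : ℝ) / (r : ℝ)) :=
          mul_le_mul_of_nonneg_left hSle (le_of_lt hr0)
    _ = (sDp p D r : ℝ) := by field_simp
  have hfin : (spU p D U : ℝ) ≤ (spU p D W : ℝ) := by
    rw [hU.2]
    calc ((p : ℝ) - 1) * (r : ℝ) * density p D ≤ (sDp p D r : ℝ) := hle2
    _ ≤ (spU p D W : ℝ) := by exact_mod_cast hWin
  have hUW : spU p D U ≤ spU p D W := by exact_mod_cast hfin
  omega

end AuxVCW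

/-- All elements of a nonempty `V(e, e')` have the same weight. -/
theorem Vset_constant_weight (p : ℕ) (hp : p.Prime) {ι : Type} [Fintype ι] [Nonempty ι]
    (D : Finset (ι → ℕ)) (hD : D.Nonempty)
    (hcoord : ∀ k : ι, ∃ d ∈ D, 0 < d k)
    (e e' : ι → ℕ) (he : e ∈ minSupport p D) (he' : e' ∈ minSupport p D)
    (v v' : D → ℕ) (hv : v ∈ Vset p D e e') (hv' : v' ∈ Vset p D e e') :
    weightV D v = weightV D v' := by
  obtain ⟨r, hr, U, hMI, hUe, hUe', hUv⟩ := hv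
  obtain ⟨r2, hr2, U2, hMI2, hU2e, hU2e', hU2v⟩ := hv'
  have hA := fun k => sumA p hp D r hr U hMI.1.1 k
  have hA2 := fun k => sumA p hp D r2 hr2 U2 hMI2.1.1 k
  simp only [hUe, hUe'] at hA
  simp only [hU2e, hU2e'] at hA2
  have hsum : ∀ k, (∑ d, (U d % p) * (d : ι → ℕ) k) = ∑ d, (U2 d % p) * (d : ι → ℕ) k := by
    intro k
    have h1 := hA k
    have h2 := hA2 k
    omega
  have h1 : ∑ d, U d % p ≤ ∑ d, U2 d % p :=
    swap_le p hp D r hr U hMI.1 (fun d => U2 d % p) (fun d => Nat.mod_lt _ hp.pos) hsum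
  have h2 : ∑ d, U2 d % p ≤ ∑ d, U d % p :=
    swap_le p hp D r2 hr2 U2 hMI2.1 (fun d => U d % p) (fun d => Nat.mod_lt _ hp.pos)
      (fun k => (hsum k).symm)
  rw [← hUv, ← hU2v]
  simp only [weightV, psiMap]
  omega
end

section
/- Let k ≥ 1 and let e_{−1}, e_0, …, e_{k−1} ∈ Σ_p(D) (not necessarily distinct) be such that V(e_i, e_{i−1}) ≠ ∅ for all 0 ≤ i ≤ k−1. Then for every choice of V_i = (v_{i,d})_{d∈D} ∈ V(e_i, e_{i−1}) (0 ≤ i ≤ k−1), there exist r ≥ k and a minimal U = (u_d) ∈ E_{D,p}(r) such that for every d ∈ D the remainder of u_d upon division by p^k equals Σ_{i=0}^{k−1} p^i·v_{i,d}, and such that φ_U(r−1−j) = e_j for all −1 ≤ j ≤ k−1 (indices taken in ℤ/rℤ). -/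
open scoped BigOperators
open scoped Classical

variable {ι : Type} [Fintype ι]

/-!
For `u ≤ p ^ r - 1` the shift `δ_r ^ s` rotates the `r` base-`p` digits of `u` by `s` places, so
`p · φ_r(δ_r^(r-1-j) U) = φ_r(δ_r^(r-j) U) + Σ_d (j-th digit of u_d) · d`. For `U ∈ MI` with
`j = 0` this gives `p · e = e' + Σ_d ψ(U)_d · d` whenever `ψ(U) ∈ V(e, e')`.

Pick `U_i ∈ MI` realising `V_i ∈ V(e_i, e_{i-1})` and build the solution from `i = k - 1` down
to `0`: if `W` has length `R` and `φ(W) = e_i`, insert the `R` digits of `W` between the lowest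
digit of `U_i` and its other digits. The result has length `R + r_i` and `p`-weight
`s_p(U_i) + s_p(W)`, hence is minimal, and by the identity above its `φ` is `φ(U_i) = e_{i-1}`.
Its lowest `k` digits are the `V_i`, and running the same identity backwards from `φ = e_{-1}`
recovers the support `e_{k-1}, …, e_{-1}`.
-/

section Digits

variable {p : ℕ}

theorem sp_add_pow_mul (hp : 1 < p) {m x : ℕ} (hx : x < p ^ m) (y : ℕ) :
    sp p (x + p ^ m * y) = sp p x + sp p y := by
  rcases y.eq_zero_or_pos with rfl | hy
  · simp [sp]
  have hlen : (Nat.digits p x).length ≤ m := (Nat.digits_length_le_iff hp x).2 hx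
  have h := Nat.digits_append_zeroes_append_digits hp hy (n := x)
    (k := m - (Nat.digits p x).length)
  rw [Nat.add_sub_cancel' hlen] at h
  simp [sp, ← h]

theorem mod_pow_eq_sum_digits (p u k : ℕ) :
    u % p ^ k = ∑ i ∈ Finset.range k, p ^ i * (u / p ^ i % p) := by
  induction k with
  | zero => simp [Nat.mod_one]
  | succ k ih => rw [Nat.mod_pow_succ, ih, Finset.sum_range_succ]

end Digits

def rotateDigits (p r s u : ℕ) : ℕ := u % p ^ (r - s) * p ^ s + u / p ^ (r - s)

section Rotation

variable {p r : ℕ}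

theorem rotateDigits_zero {u : ℕ} (hu : u < p ^ r) : rotateDigits p r 0 u = u := by
  simp [rotateDigits, Nat.mod_eq_of_lt hu, Nat.div_eq_of_lt hu]

theorem rotateDigits_le (hp : 0 < p) {s u : ℕ} (hs : s ≤ r) (hu : u < p ^ r) :
    rotateDigits p r s u ≤ p ^ r - 1 := by
  have hpow : p ^ (r - s) * p ^ s = p ^ r := by rw [← pow_add, Nat.sub_add_cancel hs]
  have hlo : u % p ^ (r - s) + 1 ≤ p ^ (r - s) := Nat.mod_lt _ (by positivity)
  have hhi : u / p ^ (r - s) < p ^ s := by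
    rw [Nat.div_lt_iff_lt_mul (by positivity), mul_comm, hpow]; exact hu
  have hmul := Nat.mul_le_mul_right (p ^ s) hlo
  rw [hpow, add_mul, one_mul] at hmul
  unfold rotateDigits
  omega

theorem mul_rotateDigits (hp : 0 < p) {j : ℕ} (hj : j < r) (u : ℕ) :
    p * rotateDigits p r (r - 1 - j) u =
      rotateDigits p r (r - j) u + (p ^ r - 1) * (u / p ^ j % p) := by
  set c := u / p ^ j % p
  have hlow : u % p ^ (j + 1) = u % p ^ j + p ^ j * c := Nat.mod_pow_succ
  have hhigh : u / p ^ j = p * (u / p ^ (j + 1)) + c := by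
    rw [pow_succ, ← Nat.div_div_eq_div_mul, Nat.div_add_mod]
  have hpow : p ^ j * p ^ (r - j) = p ^ r := by rw [← pow_add, Nat.add_sub_cancel' hj.le]
  have hpow' : p * p ^ (r - 1 - j) = p ^ (r - j) := by
    rw [← pow_succ']; congr 1; omega
  have hwrap : (p ^ r - 1) * c + c = p ^ r * c := by
    rw [← Nat.succ_mul, Nat.succ_eq_add_one, Nat.sub_add_cancel (Nat.one_le_pow _ _ hp)]
  unfold rotateDigits
  rw [show r - (r - 1 - j) = j + 1 by omega, show r - (r - j) = j by omega, hlow, hhigh]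
  calc p * ((u % p ^ j + p ^ j * c) * p ^ (r - 1 - j) + u / p ^ (j + 1))
      = u % p ^ j * (p * p ^ (r - 1 - j)) + p ^ j * (p * p ^ (r - 1 - j)) * c
          + p * (u / p ^ (j + 1)) := by ring
    _ = u % p ^ j * p ^ (r - j) + p ^ r * c + p * (u / p ^ (j + 1)) := by rw [hpow', hpow]
    _ = _ := by rw [← hwrap]; ring

theorem coprime_pow_sub_one (hp : 0 < p) (hr : r ≠ 0) : (p ^ r - 1).Coprime p :=
  ((Nat.coprime_self_sub_left (Nat.one_le_pow _ _ hp)).2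
    (Nat.coprime_one_left _)).coprime_dvd_right (dvd_pow_self p hr)

theorem iterate_shiftFun (hp : 1 < p) {s u : ℕ} (hs : s ≤ r) (hu : u ≤ p ^ r - 1) :
    (shiftFun p r)^[s] u = rotateDigits p r s u := by
  have hu' : u < p ^ r := Nat.lt_of_le_sub_one (pow_pos (by omega) r) hu
  induction s with
  | zero => exact (rotateDigits_zero hu').symm
  | succ s ih =>
    rw [Function.iterate_succ_apply', ih (by omega)]
    have hcarry := mul_rotateDigits (p := p) (r := r) (j := r - 1 - s) (by omega) (by omega) u
    rw [show r - 1 - (r - 1 - s) = s by omega, show r - (r - 1 - s) = s + 1 by omega] at hcarry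
    set x := rotateDigits p r s u
    set y := rotateDigits p r (s + 1) u
    set c := u / p ^ (r - 1 - s) % p
    have hM : 0 < p ^ r - 1 := Nat.sub_pos_of_lt (Nat.one_lt_pow (by omega) hp)
    have hx : x ≤ p ^ r - 1 := rotateDigits_le (by omega) (by omega) hu'
    have hy : y ≤ p ^ r - 1 := rotateDigits_le (by omega) hs hu'
    have hc : (p ^ r - 1) * c ≤ (p ^ r - 1) * (p - 1) :=
      Nat.mul_le_mul_left _ (Nat.le_sub_one_of_lt (Nat.mod_lt _ (by omega)))
    unfold shiftFun
    split_ifs with hxM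
    -- with `M = p ^ r - 1`: `p M = y + M c`, `y ≤ M` and `c ≤ p - 1` force `y = M`
    · have hpM : (p ^ r - 1) * (p - 1) + (p ^ r - 1) = p * (p ^ r - 1) := by
        rw [← Nat.mul_add_one, Nat.sub_add_cancel (by omega), mul_comm]
      rw [hxM] at hcarry ⊢
      omega
    -- `y = M` would make `M` divide `p x`, hence `x`; as `x < M` this forces `x = 0`
    · have hyM : y ≠ p ^ r - 1 := by
        rintro hyM
        have hdvd : p ^ r - 1 ∣ x :=
          (coprime_pow_sub_one (by omega) (by omega)).dvd_of_dvd_mul_left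
            ⟨1 + c, by rw [hcarry, hyM]; ring⟩
        rw [Nat.eq_zero_of_dvd_of_lt hdvd (by omega), hyM] at hcarry
        omega
      rw [hcarry, Nat.add_mul_mod_self_left, Nat.mod_eq_of_lt (by omega)]

end Rotation

section Tuples

variable {ι : Type} {p r : ℕ} {D : Finset (ι → ℕ)}

theorem sigmaSum_add (U W : D → ℕ) (m : ι) :
    sigmaSum D (fun d => U d + W d) m = sigmaSum D U m + sigmaSum D W m := by
  simp only [sigmaSum, add_mul, Finset.sum_add_distrib]

theorem sigmaSum_const_mul (c : ℕ) (U : D → ℕ) (m : ι) :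
    sigmaSum D (fun d => c * U d) m = c * sigmaSum D U m := by
  simp only [sigmaSum, Finset.mul_sum, mul_assoc]

theorem iterate_shiftE (s : ℕ) (U : D → ℕ) :
    (shiftE p D r)^[s] U = fun d => (shiftFun p r)^[s] (U d) := by
  induction s generalizing U with
  | zero => rfl
  | succ s ih => rw [Function.iterate_succ_apply, ih]; rfl

variable {U : D → ℕ}

theorem iterate_shiftE_eq_rotateDigits (hp : 1 < p) (hU : ∀ d, U d ≤ p ^ r - 1) {s : ℕ}
    (hs : s ≤ r) : (shiftE p D r)^[s] U = fun d => rotateDigits p r s (U d) := by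
  rw [iterate_shiftE]
  exact funext fun d => iterate_shiftFun hp hs (hU d)

theorem iterate_shiftE_self (hp : 1 < p) (hU : ∀ d, U d ≤ p ^ r - 1) :
    (shiftE p D r)^[r] U = U := by
  rw [iterate_shiftE_eq_rotateDigits hp hU le_rfl]
  funext d
  simp [rotateDigits, Nat.mod_one]

theorem suppMap_natCast (hp : 1 < p) (hU : ∀ d, U d ≤ p ^ r - 1) (s : ℕ) :
    suppMap p D r U s = phiMap p D r ((shiftE p D r)^[s] U) := by
  rw [suppMap, ZMod.val_natCast,
    Function.IsPeriodicPt.iterate_mod_apply (iterate_shiftE_self hp hU)]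

theorem mul_sigmaSum_iterate_shiftE (hp : 1 < p) (hU : ∀ d, U d ≤ p ^ r - 1) {j : ℕ}
    (hj : j < r) (m : ι) :
    p * sigmaSum D ((shiftE p D r)^[r - 1 - j] U) m =
      sigmaSum D ((shiftE p D r)^[r - j] U) m +
        (p ^ r - 1) * sigmaSum D (fun d => U d / p ^ j % p) m := by
  rw [iterate_shiftE_eq_rotateDigits hp hU (by omega),
    iterate_shiftE_eq_rotateDigits hp hU (by omega), ← sigmaSum_const_mul, ← sigmaSum_const_mul,
    ← sigmaSum_add]
  simp only [sigmaSum, mul_rotateDigits (by omega : 0 < p) hj, add_mul]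

theorem phiMap_eq_of_sigmaSum_eq {e : ι → ℕ} (hM : 0 < p ^ r - 1)
    (h : ∀ m, sigmaSum D U m = (p ^ r - 1) * e m) : phiMap p D r U = e :=
  funext fun m => by rw [phiMap, h, Nat.mul_div_cancel_left _ hM]

end Tuples

section Support

variable {ι : Type} {p r : ℕ} {D : Finset (ι → ℕ)}

theorem natCast_sub_one_eq_neg_one (hr : 1 ≤ r) : ((r - 1 : ℕ) : ZMod r) = -1 := by
  rw [Nat.cast_sub hr, ZMod.natCast_self, Nat.cast_one, zero_sub]

theorem sigmaSum_eq_of_suppMap_zero {U : D → ℕ} {e : ι → ℕ} (hU : memE p D r U)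
    (h : suppMap p D r U 0 = e) (m : ι) : sigmaSum D U m = (p ^ r - 1) * e m := by
  refine Nat.eq_mul_of_div_eq_right (hU.2 m).1 ?_
  rw [← h, suppMap, ZMod.val_zero]
  rfl

theorem mul_suppMap_neg_one (hp : 1 < p) (hr : 1 ≤ r) {U : D → ℕ} (hU : memE p D r U)
    (m : ι) :
    p * suppMap p D r U (-1) m = suppMap p D r U 0 m + sigmaSum D (psiMap p D U) m := by
  have hM : 0 < p ^ r - 1 := Nat.sub_pos_of_lt (Nat.one_lt_pow (by omega) hp)
  have hcarry := mul_sigmaSum_iterate_shiftE hp hU.1 (j := 0) (by omega) m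
  simp only [Nat.sub_zero, pow_zero, Nat.div_one] at hcarry
  rw [iterate_shiftE_self hp hU.1, show (fun d => U d % p) = psiMap p D U from rfl] at hcarry
  rw [← natCast_sub_one_eq_neg_one hr, ← Nat.cast_zero, suppMap_natCast hp hU.1,
    suppMap_natCast hp hU.1, Function.iterate_zero, id, phiMap, phiMap]
  obtain ⟨a, ha⟩ := (hU.2 m).1
  obtain ⟨b, hb⟩ : p ^ r - 1 ∣ sigmaSum D ((shiftE p D r)^[r - 1] U) m :=
    (coprime_pow_sub_one (by omega) (by omega)).dvd_of_dvd_mul_left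
      ⟨a + sigmaSum D (psiMap p D U) m, by rw [hcarry, ha]; ring⟩
  rw [ha, hb] at hcarry ⊢
  rw [Nat.mul_div_cancel_left _ hM, Nat.mul_div_cancel_left _ hM]
  exact Nat.eq_of_mul_eq_mul_left hM (by linarith)

theorem exists_minimalSol_of_mem_Vset {e e' : ι → ℕ} {v : D → ℕ}
    (hv : v ∈ Vset p D e e') :
    ∃ r, 1 ≤ r ∧ ∃ U, minimalSol p D r U ∧ (∀ m, sigmaSum D U m = (p ^ r - 1) * e' m) ∧
      ∀ d, U d % p = v d := by
  obtain ⟨r, hr, U, ⟨hU, -⟩, -, hfirst, rfl⟩ := hv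
  exact ⟨r, hr, U, hU, sigmaSum_eq_of_suppMap_zero hU.1 hfirst, fun d => rfl⟩

theorem mul_eq_add_sigmaSum_of_mem_Vset (hp : 1 < p) {e e' : ι → ℕ} {v : D → ℕ}
    (hv : v ∈ Vset p D e e') (m : ι) : p * e m = e' m + sigmaSum D v m := by
  obtain ⟨r, hr, U, ⟨⟨hU, -⟩, -⟩, rfl, rfl, rfl⟩ := hv
  exact mul_suppMap_neg_one hp hr hU m

end Support

section Splice

variable {ι : Type} {p R : ℕ} {D : Finset (ι → ℕ)}

theorem add_pow_mul_lt_pow_add {a b x y : ℕ} (hx : x < p ^ a) (hy : y < p ^ b) :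
    x + p ^ a * y < p ^ (a + b) :=
  calc x + p ^ a * y < p ^ a * (y + 1) := by rw [mul_add_one]; omega
    _ ≤ p ^ a * p ^ b := Nat.mul_le_mul_left _ hy
    _ = p ^ (a + b) := (pow_add p a b).symm

theorem mod_pow_div_pow_mod {j R : ℕ} (hj : j < R) (x : ℕ) :
    x % p ^ R / p ^ j % p = x / p ^ j % p := by
  rw [show p ^ R = p ^ j * p ^ (R - j) by rw [← pow_add, Nat.add_sub_cancel' hj.le],
    Nat.mod_mul_right_div_self, Nat.mod_mod_of_dvd _ (dvd_pow_self p (by omega))]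

def spliceDigits (p R u w : ℕ) : ℕ := u % p + p * w + p ^ (R + 1) * (u / p)

theorem spliceDigits_mod (u w : ℕ) : spliceDigits p R u w % p = u % p := by
  rw [spliceDigits, pow_succ', mul_assoc, add_assoc, ← mul_add, Nat.add_mul_mod_self_left,
    Nat.mod_mod]

theorem spliceDigits_div_mod {w : ℕ} (hp : 0 < p) (hw : w < p ^ R) (u : ℕ) :
    spliceDigits p R u w / p % p ^ R = w := by
  rw [spliceDigits, pow_succ', mul_assoc, add_assoc, ← mul_add, Nat.add_mul_div_left _ _ hp,
    Nat.div_eq_of_lt (Nat.mod_lt _ hp), zero_add, Nat.add_mul_mod_self_left,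
    Nat.mod_eq_of_lt hw]

theorem spliceDigits_lt {r u w : ℕ} (hp : 0 < p) (hr : r ≠ 0) (hu : u < p ^ r)
    (hw : w < p ^ R) : spliceDigits p R u w < p ^ (R + r) := by
  have hlow : u % p + p ^ 1 * w < p ^ (1 + R) :=
    add_pow_mul_lt_pow_add (by simpa using Nat.mod_lt u hp) hw
  have hhigh : u / p < p ^ (r - 1) := by
    rw [Nat.div_lt_iff_lt_mul hp, ← pow_succ, Nat.sub_add_cancel (by omega)]; exact hu
  rw [pow_one, add_comm 1] at hlow
  simpa [spliceDigits, show R + 1 + (r - 1) = R + r by omega] using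
    add_pow_mul_lt_pow_add hlow hhigh

theorem sp_spliceDigits {u w : ℕ} (hp : 1 < p) (hw : w < p ^ R) :
    sp p (spliceDigits p R u w) = sp p u + sp p w := by
  have hlow : u % p < p ^ 1 := by simpa using Nat.mod_lt u (by omega)
  have hmid : u % p + p ^ 1 * w < p ^ (1 + R) := add_pow_mul_lt_pow_add hlow hw
  rw [pow_one, add_comm 1] at hmid
  have hdigit (y : ℕ) : sp p (u % p + p * y) = sp p (u % p) + sp p y := by
    simpa using sp_add_pow_mul hp hlow y
  conv_rhs => rw [← Nat.mod_add_div u p]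
  rw [spliceDigits, sp_add_pow_mul hp hmid, hdigit, hdigit]
  ring

theorem minimalSol_spliceDigits (hp : 1 < p) {r : ℕ} (hr : r ≠ 0) {U W : D → ℕ}
    {e e' : ι → ℕ} (hU : minimalSol p D r U) (hUsum : ∀ m, sigmaSum D U m = (p ^ r - 1) * e' m)
    (hUe : ∀ m, p * e m = e' m + sigmaSum D (fun d => U d % p) m)
    (hW : minimalSol p D R W) (hWsum : ∀ m, sigmaSum D W m = (p ^ R - 1) * e m) :
    minimalSol p D (R + r) (fun d => spliceDigits p R (U d) (W d)) ∧
      ∀ m, sigmaSum D (fun d => spliceDigits p R (U d) (W d)) m = (p ^ (R + r) - 1) * e' m := by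
  have hpow (n : ℕ) : 1 ≤ p ^ n := Nat.one_le_pow _ _ (by omega)
  have hlt {n u : ℕ} (hu : u ≤ p ^ n - 1) : u < p ^ n := Nat.lt_of_le_sub_one (hpow n) hu
  have hsum (m : ι) :
      sigmaSum D (fun d => spliceDigits p R (U d) (W d)) m = (p ^ (R + r) - 1) * e' m := by
    have hsplit : sigmaSum D U m =
        sigmaSum D (fun d => U d % p) m + p * sigmaSum D (fun d => U d / p) m := by
      simp only [← sigmaSum_const_mul, ← sigmaSum_add, Nat.mod_add_div]
    simp only [spliceDigits, sigmaSum_add, sigmaSum_const_mul]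
    have h1 := hUsum m
    have h2 := hWsum m
    have h3 := hUe m
    rw [hsplit] at h1
    zify [hpow r, hpow R, hpow (R + r)] at h1 h2 h3 ⊢
    linear_combination ((p : ℤ) ^ R - 1) * h3 + (p : ℤ) ^ R * h1 + p * h2
  refine ⟨⟨⟨fun d => ?_, fun m => ⟨?_, ?_⟩⟩, ?_⟩, hsum⟩
  · exact Nat.le_sub_one_of_lt
      (spliceDigits_lt (by omega) hr (hlt (hU.1.1 d)) (hlt (hW.1.1 d)))
  · exact hsum m ▸ dvd_mul_right _ _
  · have hpos := (hU.1.2 m).2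
    rw [hUsum m] at hpos
    rw [hsum m]
    exact Nat.mul_pos (Nat.sub_pos_of_lt (Nat.one_lt_pow (by omega) hp))
      (Nat.pos_of_mul_pos_left hpos)
  · have hsp : spU p D (fun d => spliceDigits p R (U d) (W d)) = spU p D U + spU p D W := by
      simp only [spU, sp_spliceDigits hp (hlt (hW.1.1 _)), Finset.sum_add_distrib]
    rw [hsp]
    push_cast [hU.2, hW.2]
    ring

end Splice

section Construction

variable {ι : Type} {p : ℕ} {D : Finset (ι → ℕ)} {k : ℕ} {e : ℤ → ι → ℕ} {V : ℕ → D → ℕ}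

theorem exists_minimalSol_digits (hp : 1 < p)
    (hV : ∀ i : ℕ, i < k → V i ∈ Vset p D (e i) (e (i - 1))) (t : ℕ) :
    ∀ i, i + t + 1 = k → ∃ R, t + 1 ≤ R ∧ ∃ W, minimalSol p D R W ∧
      (∀ m, sigmaSum D W m = (p ^ R - 1) * e (i - 1) m) ∧
      ∀ j ≤ t, ∀ d, W d / p ^ j % p = V (i + j) d := by
  induction t with
  | zero =>
    intro i hi
    obtain ⟨r, hr, U, hU, hUsum, hUv⟩ := exists_minimalSol_of_mem_Vset (hV i (by omega))
    refine ⟨r, hr, U, hU, hUsum, fun j hj d => ?_⟩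
    obtain rfl : j = 0 := by omega
    simpa using hUv d
  | succ t ih =>
    intro i hi
    obtain ⟨R, hR, W, hW, hWsum, hWv⟩ := ih (i + 1) (by omega)
    obtain ⟨r, hr, U, hU, hUsum, hUv⟩ := exists_minimalSol_of_mem_Vset (hV i (by omega))
    have hUe := mul_eq_add_sigmaSum_of_mem_Vset hp (hV i (by omega))
    simp only [Nat.cast_add, Nat.cast_one, add_sub_cancel_right] at hWsum
    obtain ⟨hmin, hsum⟩ := minimalSol_spliceDigits hp (by omega) hU hUsum
      (by simpa only [hUv] using hUe) hW hWsum
    have hWlt (d : D) : W d < p ^ R := Nat.lt_of_le_sub_one (pow_pos (by omega) R) (hW.1.1 d)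
    refine ⟨R + r, by omega, _, hmin, hsum, fun j hj d => ?_⟩
    rcases j with _ | j
    · simpa [spliceDigits_mod] using hUv d
    · rw [pow_succ', ← Nat.div_div_eq_div_mul, ← mod_pow_div_pow_mod (by omega : j < R),
        spliceDigits_div_mod (by omega) (hWlt d), hWv j (by omega), add_right_comm, add_assoc]

theorem suppMap_eq_of_digits (hp : 1 < p) {R : ℕ} (hR : R ≠ 0) (hkR : k ≤ R) {W : D → ℕ}
    (hW : ∀ d, W d ≤ p ^ R - 1) (hsum : ∀ m, sigmaSum D W m = (p ^ R - 1) * e (-1) m)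
    (hdig : ∀ j < k, ∀ d, W d / p ^ j % p = V j d)
    (he : ∀ j < k, ∀ m, p * e j m = e (j - 1) m + sigmaSum D (V j) m) :
    ∀ j : ℤ, -1 ≤ j → j ≤ k - 1 → suppMap p D R W (((R : ℤ) - 1 - j : ℤ) : ZMod R) = e j := by
  have hM : 0 < p ^ R - 1 := Nat.sub_pos_of_lt (Nat.one_lt_pow hR hp)
  have hchain (j : ℕ) (hj : j ≤ k) (m : ι) :
      sigmaSum D ((shiftE p D R)^[R - j] W) m = (p ^ R - 1) * e (j - 1) m := by
    induction j generalizing m with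
    | zero => simpa [iterate_shiftE_self hp hW] using hsum m
    | succ j ih =>
      have hcarry := mul_sigmaSum_iterate_shiftE hp hW (j := j) (by omega) m
      rw [ih (by omega) m, show R - 1 - j = R - (j + 1) by omega,
        show (fun d => W d / p ^ j % p) = V j from funext (hdig j (by omega)), ← mul_add,
        ← he j (by omega) m] at hcarry
      push_cast
      rw [add_sub_cancel_right]
      exact Nat.eq_of_mul_eq_mul_left (by omega) (hcarry.trans (by ring))
  intro j hj1 hj2
  obtain ⟨n, rfl⟩ : ∃ n : ℕ, j = n - 1 := ⟨(j + 1).toNat, by omega⟩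
  rw [show (R : ℤ) - 1 - (n - 1) = ((R - n : ℕ) : ℤ) by omega, Int.cast_natCast,
    suppMap_natCast hp hW]
  exact phiMap_eq_of_sigmaSum_eq hM (hchain n (by omega))

end Construction

theorem glue_digits_exists_general (p : ℕ) (hp : p.Prime) {ι : Type}
    (D : Finset (ι → ℕ))
    (k : ℕ) (hk : 1 ≤ k) (e : ℤ → (ι → ℕ))
    (V : ℕ → (D → ℕ))
    (hV : ∀ i : ℕ, i < k → V i ∈ Vset p D (e (i : ℤ)) (e ((i : ℤ) - 1))) :
    ∃ r : ℕ, k ≤ r ∧ ∃ U : D → ℕ, minimalSol p D r U ∧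
      (∀ d, U d % p ^ k = ∑ i ∈ Finset.range k, p ^ i * V i d) ∧
      (∀ j : ℤ, -1 ≤ j → j ≤ (k : ℤ) - 1 →
        suppMap p D r U (((r : ℤ) - 1 - j : ℤ) : ZMod r) = e j) := by
  obtain ⟨R, hkR, W, hW, hsum, hdig⟩ := exists_minimalSol_digits hp.one_lt hV (k - 1) 0 (by omega)
  simp only [Nat.cast_zero, zero_sub, zero_add] at hsum hdig
  refine ⟨R, by omega, W, hW, fun d => ?_, suppMap_eq_of_digits hp.one_lt (by omega) (by omega)
    hW.1.1 hsum (fun j hj => hdig j (by omega))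
    fun j hj => mul_eq_add_sigmaSum_of_mem_Vset hp.one_lt (hV j hj)⟩
  rw [mod_pow_eq_sum_digits]
  exact Finset.sum_congr rfl fun j hj => by rw [hdig j (by have := Finset.mem_range.1 hj; omega)]

/-- Given `e_{−1}, e_0, …, e_{k−1} ∈ Σ_p(D)` with all `V(e_i, e_{i−1})` nonempty,
and a choice `V_i ∈ V(e_i, e_{i−1})`, there exists a minimal solution `U` of some
length `r ≥ k` whose `k` lowest base-`p` digits are the `V_i` and whose support
ends with `e_{k−1}, …, e_0, e_{−1}`. -/
theorem glue_digits_exists (p : ℕ) (hp : p.Prime) {ι : Type} [Fintype ι] [Nonempty ι]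
    (D : Finset (ι → ℕ)) (hD : D.Nonempty)
    (hcoord : ∀ k : ι, ∃ d ∈ D, 0 < d k)
    (k : ℕ) (hk : 1 ≤ k) (e : ℤ → (ι → ℕ))
    (he : ∀ j : ℤ, -1 ≤ j → j ≤ (k : ℤ) - 1 → e j ∈ minSupport p D)
    (V : ℕ → (D → ℕ))
    (hV : ∀ i : ℕ, i < k → V i ∈ Vset p D (e (i : ℤ)) (e ((i : ℤ) - 1))) :
    ∃ r : ℕ, k ≤ r ∧ ∃ U : D → ℕ, minimalSol p D r U ∧
      (∀ d, U d % p ^ k = ∑ i ∈ Finset.range k, p ^ i * V i d) ∧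
      (∀ j : ℤ, -1 ≤ j → j ≤ (k : ℤ) - 1 →
        suppMap p D r U (((r : ℤ) - 1 - j : ℤ) : ZMod r) = e j) :=
  glue_digits_exists_general p hp D k hk e V hV
end
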